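/- arXiv:1011.5371 — 3 statements merged into one kernel-verified Lean document; each statement's English description precedes it below -/
import Mathlib

section
/- Consider the action of T^3 on S^3 × S^3 × S^3 ⊂ (ℂ²)³ given by (z₁,z₂,z₃)·((u₁,v₁),(u₂,v₂),(u₃,v₃)) = ((z₁z₂²u₁, z̄₁v₁), (z₂z₃²u₂, z̄₂v₂), (z̄₁z₃u₃, z̄₃v₃)). A point with all |vᵢ|² + |uᵢ|² = 1 has nontrivial stabilizer if and only if v₁ = v₂ = v₃ = 0, in which case the stabilizer is the cyclic group of order 3 generated by (ω,ω,ω) with ω = e^{2πi/3}. -/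
/-- The action (1) of Example 2: `(z₁,z₂,z₃)` sends
`((u₁,v₁),(u₂,v₂),(u₃,v₃))` to `((z₁z₂²u₁, z̄₁v₁),(z₂z₃²u₂, z̄₂v₂),(z̄₁z₃u₃, z̄₃v₃))`.
`FixesEx2 z u v` says that the torus element `z` fixes the point `(u,v)`. -/
def FixesEx2 (z u v : Fin 3 → ℂ) : Prop :=
  z 0 * (z 1) ^ 2 * u 0 = u 0 ∧ star (z 0) * v 0 = v 0 ∧
  z 1 * (z 2) ^ 2 * u 1 = u 1 ∧ star (z 1) * v 1 = v 1 ∧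
  star (z 0) * z 2 * u 2 = u 2 ∧ star (z 2) * v 2 = v 2

/-
A coordinate `vᵢ ≠ 0` forces `zᵢ = 1`, while `vᵢ = 0` forces `uᵢ ≠ 0` and hence the weight of
`z` on `uᵢ` to be `1`. The weights `z₁z₂²`, `z₂z₃²`, `z̄₁z₃` link the coordinates cyclically, so
that a single `zᵢ = 1` forces `z = 1`: a nontrivial stabilizer needs every `vᵢ = 0`. When every
`vᵢ = 0`, all three weights are `1`, which on the torus means `z = (c,c,c)` with `c³ = 1`.
-/

/-- The character by which `z` scales `uᵢ`. -/
def weightEx2 (z : Fin 3 → ℂ) : Fin 3 → ℂ :=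
  ![z 0 * z 1 ^ 2, z 1 * z 2 ^ 2, star (z 0) * z 2]

lemma fixesEx2_iff {z u v : Fin 3 → ℂ} :
    FixesEx2 z u v ↔ ∀ i, weightEx2 z i * u i = u i ∧ star (z i) * v i = v i := by
  simp only [FixesEx2, Fin.forall_fin_succ, IsEmpty.forall_iff, and_true, weightEx2]
  simp [and_assoc]

lemma Complex.star_mul_self_of_norm_eq_one {c : ℂ} (hc : ‖c‖ = 1) : star c * c = 1 := by
  rw [Complex.star_def, Complex.conj_mul', hc]
  norm_num

namespace FixesEx2

variable {z u v : Fin 3 → ℂ}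

lemma eq_one_of_ne_zero (h : FixesEx2 z u v) {i : Fin 3} (hv : v i ≠ 0) : z i = 1 := by
  have hstar : star (z i) = 1 := (mul_eq_right₀ hv).1 (fixesEx2_iff.1 h i).2
  simpa using congrArg star hstar

lemma weightEx2_eq_one (h : FixesEx2 z u v) {i : Fin 3} (hs : ‖u i‖ ^ 2 + ‖v i‖ ^ 2 = 1)
    (hv : v i = 0) : weightEx2 z i = 1 := by
  have hu : u i ≠ 0 := by
    rintro hu
    simp [hu, hv] at hs
  exact (mul_eq_right₀ hu).1 (fixesEx2_iff.1 h i).1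

lemma eq_one_or_weightEx2_eq_one (h : FixesEx2 z u v) {i : Fin 3}
    (hs : ‖u i‖ ^ 2 + ‖v i‖ ^ 2 = 1) : z i = 1 ∨ weightEx2 z i = 1 := by
  by_cases hv : v i = 0
  · exact .inr (h.weightEx2_eq_one hs hv)
  · exact .inl (h.eq_one_of_ne_zero hv)

lemma iff_weightEx2_eq_one (hs : ∀ i, ‖u i‖ ^ 2 + ‖v i‖ ^ 2 = 1) (hv : ∀ i, v i = 0) :
    FixesEx2 z u v ↔ ∀ i, weightEx2 z i = 1 := by
  refine ⟨fun h i => h.weightEx2_eq_one (hs i) (hv i), fun h => fixesEx2_iff.2 fun i => ?_⟩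
  simp [h i, hv i]

end FixesEx2

lemma eq_one_of_eq_one_or_weightEx2_eq_one {z : Fin 3 → ℂ}
    (h : ∀ i, z i = 1 ∨ weightEx2 z i = 1) {i : Fin 3} (hi : z i = 1) : z = 1 := by
  have h02 : z 0 = 1 → z 2 = 1 := fun h0 => by
    simpa [weightEx2, h0] using h 2
  have h21 : z 2 = 1 → z 1 = 1 := fun h2 => by
    simpa [weightEx2, h2] using h 1
  have h10 : z 1 = 1 → z 0 = 1 := fun h1 => by
    simpa [weightEx2, h1] using h 0
  have h0 : z 0 = 1 := by
    fin_cases i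
    exacts [hi, h10 hi, h10 (h21 hi)]
  ext j
  fin_cases j
  exacts [h0, h21 (h02 h0), h02 h0]

lemma norm_eq_one_and_weightEx2_eq_one_iff {z : Fin 3 → ℂ} :
    ((∀ i, ‖z i‖ = 1) ∧ ∀ i, weightEx2 z i = 1) ↔ ∃ c : ℂ, c ^ 3 = 1 ∧ z = fun _ => c := by
  constructor
  · rintro ⟨hz, h⟩
    have h0 : z 0 * z 1 ^ 2 = 1 := h 0
    have h1 : z 1 * z 2 ^ 2 = 1 := h 1
    have h2 : star (z 0) * z 2 = 1 := h 2
    have hz20 : z 2 = z 0 := by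
      calc z 2 = star (z 0) * z 0 * z 2 := by
            rw [Complex.star_mul_self_of_norm_eq_one (hz 0), one_mul]
        _ = z 0 := by linear_combination z 0 * h2
    have hz0 : z 0 ≠ 0 := norm_ne_zero_iff.1 (by rw [hz 0]; exact one_ne_zero)
    have hz1 : z 1 ≠ 0 := norm_ne_zero_iff.1 (by rw [hz 1]; exact one_ne_zero)
    -- `z₀z₁² = z₁z₀²` once `z₂ = z₀`
    have hz10 : z 1 = z 0 := by
      have hprod : z 0 * z 1 * (z 1 - z 0) = 0 := by
        rw [hz20] at h1
        linear_combination h0 - h1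
      exact sub_eq_zero.1 ((mul_eq_zero.1 hprod).resolve_left (mul_ne_zero hz0 hz1))
    refine ⟨z 0, by rw [hz10] at h0; linear_combination h0, ?_⟩
    ext j
    fin_cases j
    exacts [rfl, hz10, hz20]
  · rintro ⟨c, hc, rfl⟩
    have hcn : ‖c‖ = 1 := Complex.norm_eq_one_of_pow_eq_one hc three_ne_zero
    refine ⟨fun _ => hcn, fun i => ?_⟩
    fin_cases i
    · simpa [weightEx2, ← pow_succ'] using hc
    · simpa [weightEx2, ← pow_succ'] using hc
    · exact Complex.star_mul_self_of_norm_eq_one hcn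

lemma IsPrimitiveRoot.pow_three_eq_one_iff {R : Type*} [CommRing R] [IsDomain R] {ω c : R}
    (hω : IsPrimitiveRoot ω 3) :
    c ^ 3 = 1 ↔ c = 1 ∨ c = ω ∨ c = ω ^ 2 := by
  constructor
  · intro hc
    obtain ⟨k, hk, rfl⟩ := hω.eq_pow_of_pow_eq_one hc
    interval_cases k <;> simp
  · rintro (rfl | rfl | rfl)
    · exact one_pow 3
    · exact hω.pow_eq_one
    · rw [← pow_mul, mul_comm, pow_mul, hω.pow_eq_one, one_pow]

/-- Lemma 1: a point of `S³×S³×S³` has nontrivial stabilizer for the action above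
iff `v₁ = v₂ = v₃ = 0`, in which case the stabilizer is `ℤ₃` generated by
`(ω,ω,ω)`, `ω = e^{2πi/3}`. -/
theorem stmt_0 (u v : Fin 3 → ℂ) (hsphere : ∀ i, ‖u i‖ ^ 2 + ‖v i‖ ^ 2 = 1)
    (ω : ℂ) (hω : ω = Complex.exp (2 * Real.pi * Complex.I / 3)) :
    ((∃ z : Fin 3 → ℂ, (∀ i, ‖z i‖ = 1) ∧ z ≠ (fun _ => 1) ∧ FixesEx2 z u v) ↔
      (v 0 = 0 ∧ v 1 = 0 ∧ v 2 = 0)) ∧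
    ((v 0 = 0 ∧ v 1 = 0 ∧ v 2 = 0) →
      {z : Fin 3 → ℂ | (∀ i, ‖z i‖ = 1) ∧ FixesEx2 z u v} =
        {fun _ => 1, fun _ => ω, fun _ => ω ^ 2}) := by
  have hprim : IsPrimitiveRoot ω 3 := by
    rw [hω]; exact_mod_cast Complex.isPrimitiveRoot_exp 3 three_ne_zero
  have stabilizer : (v 0 = 0 ∧ v 1 = 0 ∧ v 2 = 0) →
      {z : Fin 3 → ℂ | (∀ i, ‖z i‖ = 1) ∧ FixesEx2 z u v} =
        {fun _ => 1, fun _ => ω, fun _ => ω ^ 2} := by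
    rintro ⟨hv0, hv1, hv2⟩
    have hv : ∀ i, v i = 0 := fun i => by fin_cases i <;> assumption
    ext z
    simp only [Set.mem_ofPred_eq, FixesEx2.iff_weightEx2_eq_one hsphere hv,
      norm_eq_one_and_weightEx2_eq_one_iff, hprim.pow_three_eq_one_iff]
    simp [or_and_right, exists_or]
  refine ⟨⟨fun ⟨z, _, hne, hfix⟩ => ?_, fun hv => ?_⟩, stabilizer⟩
  · suffices ∀ i, v i = 0 from ⟨this 0, this 1, this 2⟩
    intro i
    by_contra hvi
    exact hne (eq_one_of_eq_one_or_weightEx2_eq_one (fun j => hfix.eq_one_or_weightEx2_eq_one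
      (hsphere j)) (hfix.eq_one_of_ne_zero hvi))
  · have hmem : (fun _ => ω) ∈ {z : Fin 3 → ℂ | (∀ i, ‖z i‖ = 1) ∧ FixesEx2 z u v} := by
      rw [stabilizer hv]; simp
    exact ⟨_, hmem.1, fun h => hprim.ne_one (by norm_num) (congrFun h 0), hmem.2⟩
end

section
/- Substituting the functions h(t) = r(t)·√(1−φ(r(t))) and f(t) = r(t), where dt = dr/√(1−φ(r)), into the doubly warped Ricci formulas Ric(X₀,X₀) = −h''/h − (2n−2)f''/f, Ric(X₁,X₁) = −h''/h − (2n−2)f'h'/(fh) + (2n−2)h²/f⁴, Ric(X₂,X₂) = −f''/f − f'h'/(fh) − (2n−3)(f')²/f² + 2n/f² − 2h²/f⁴, yields Ric(X₀,X₀) = Ric(X₁,X₁) = (1/2)(φ'' + (2n+1)φ'/r) and Ric(X₂,X₂) = φ'/r + 2nφ/r² (derivatives of φ with respect to r). -/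
/-!
Along a solution of `r' = √(1 - φ(r))` put `s = √(1 - φ(r))`; then `s' = -φ'(r)/2`, so `f = r` and
`h = r s` have `f' = s`, `f'' = -φ'(r)/2`, `h' = s² - rφ'(r)/2` and
`h'' = -φ'(r)s - s(φ'(r) + rφ''(r))/2`. Every `t`-derivative thus carries a factor `s`, which
cancels against `h = r s`, and the Ricci formulas become rational identities in `r, s, φ, φ', φ''`
that only use `s² = 1 - φ(r)`.
-/

open Real Filter Topology

noncomputable section

/-- `Ric(X₀,X₀) = -h''/h - (2n-2)f''/f` of `dt² + h² ds_v² + f² ds_h²`, from the values of `f, h`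
and their `t`-derivatives at one point; `ricci₁`, `ricci₂` likewise. -/
def ricci₀ (n f f'' h h'' : ℝ) : ℝ :=
  -h'' / h - (2 * n - 2) * f'' / f

def ricci₁ (n f f' h h' h'' : ℝ) : ℝ :=
  -h'' / h - (2 * n - 2) * (f' * h') / (f * h) + (2 * n - 2) * h ^ 2 / f ^ 4

def ricci₂ (n f f' f'' h h' : ℝ) : ℝ :=
  -f'' / f - f' * h' / (f * h) - (2 * n - 3) * f' ^ 2 / f ^ 2 + 2 * n / f ^ 2 - 2 * h ^ 2 / f ^ 4

end

section Algebra

variable (n r s p₀ p₁ p₂ : ℝ)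

theorem ricci₀_eq (hr : r ≠ 0) (hs : s ≠ 0) :
    ricci₀ n r (-p₁ / 2) (r * s) (-p₁ * s - s * (p₁ + r * p₂) / 2) =
      1 / 2 * (p₂ + (2 * n + 1) * p₁ / r) := by
  unfold ricci₀
  field_simp
  ring

theorem ricci₁_eq (hr : r ≠ 0) (hs : s ≠ 0) :
    ricci₁ n r s (r * s) (s ^ 2 - r * p₁ / 2) (-p₁ * s - s * (p₁ + r * p₂) / 2) =
      1 / 2 * (p₂ + (2 * n + 1) * p₁ / r) := by
  unfold ricci₁
  field_simp
  ring

theorem ricci₂_eq (hr : r ≠ 0) (hs : s ≠ 0) (hsp : s ^ 2 = 1 - p₀) :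
    ricci₂ n r s (-p₁ / 2) (r * s) (s ^ 2 - r * p₁ / 2) = p₁ / r + 2 * n * p₀ / r ^ 2 := by
  unfold ricci₂
  field_simp
  rw [hsp]
  ring

end Algebra

section Reparametrization

variable {φ r : ℝ → ℝ} {t : ℝ}

theorem hasDerivAt_sqrt_one_sub_comp (hφ : DifferentiableAt ℝ φ (r t))
    (hr : HasDerivAt r √(1 - φ (r t)) t) (ht : φ (r t) < 1) :
    HasDerivAt (fun x => √(1 - φ (r x))) (-deriv φ (r t) / 2) t := by
  have hs : √(1 - φ (r t)) ≠ 0 := (sqrt_pos.2 (sub_pos.2 ht)).ne'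
  have hφr : HasDerivAt (fun x => φ (r x)) (deriv φ (r t) * √(1 - φ (r t))) t :=
    hφ.hasDerivAt.comp t hr
  convert (hφr.const_sub 1).sqrt (sub_pos.2 ht).ne' using 1
  field_simp

theorem hasDerivAt_mul_sqrt_one_sub_comp (hφ : DifferentiableAt ℝ φ (r t))
    (hr : HasDerivAt r √(1 - φ (r t)) t) (ht : φ (r t) < 1) :
    HasDerivAt (fun x => r x * √(1 - φ (r x)))
      (√(1 - φ (r t)) ^ 2 - r t * deriv φ (r t) / 2) t := by
  refine (hr.fun_mul (hasDerivAt_sqrt_one_sub_comp hφ hr ht)).congr_deriv ?_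
  ring

theorem deriv_deriv_of_hasDerivAt_sqrt (hφ : DifferentiableAt ℝ φ (r t))
    (hr : ∀ u, HasDerivAt r √(1 - φ (r u)) u) (ht : φ (r t) < 1) :
    deriv (deriv r) t = -deriv φ (r t) / 2 := by
  rw [show deriv r = _ from funext fun u => (hr u).deriv]
  exact (hasDerivAt_sqrt_one_sub_comp hφ (hr t) ht).deriv

theorem deriv_deriv_mul_sqrt_one_sub_comp (hφ : Differentiable ℝ φ)
    (hφ' : DifferentiableAt ℝ (deriv φ) (r t)) (hr : ∀ u, HasDerivAt r √(1 - φ (r u)) u)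
    (ht : φ (r t) < 1) :
    deriv (deriv fun x => r x * √(1 - φ (r x))) t =
      -deriv φ (r t) * √(1 - φ (r t)) -
        √(1 - φ (r t)) * (deriv φ (r t) + r t * deriv (deriv φ) (r t)) / 2 := by
  have h_near : ∀ᶠ u in 𝓝 t, φ (r u) < 1 :=
    ((hφ _).continuousAt.comp (hr t).continuousAt).eventually_lt continuousAt_const ht
  have h_deriv : deriv (fun x => r x * √(1 - φ (r x))) =ᶠ[𝓝 t]
      fun u => √(1 - φ (r u)) ^ 2 - r u * deriv φ (r u) / 2 :=
    h_near.mono fun u hu => (hasDerivAt_mul_sqrt_one_sub_comp (hφ _) (hr u) hu).deriv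
  rw [h_deriv.deriv_eq]
  have hs := hasDerivAt_sqrt_one_sub_comp (hφ _) (hr t) ht
  have h_prod := ((hr t).fun_mul (hφ'.hasDerivAt.comp t (hr t))).div_const 2
  refine (((hs.fun_pow 2).sub h_prod).congr_deriv ?_).deriv
  simp only [Function.comp_apply]
  ring

end Reparametrization

theorem stmt_10_general (n : ℕ)
    (φ : ℝ → ℝ) (hφ : ContDiff ℝ 2 φ)
    (r : ℝ → ℝ) (hr : ∀ t, HasDerivAt r (Real.sqrt (1 - φ (r t))) t)
    (f h : ℝ → ℝ) (hf : f = r)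
    (hh : h = fun t => r t * Real.sqrt (1 - φ (r t))) :
    ∀ t : ℝ, 0 < r t → φ (r t) < 1 →
      (-(deriv (deriv h) t) / h t - (2 * n - 2) * (deriv (deriv f) t) / f t
          = (1 / 2) * (deriv (deriv φ) (r t) + (2 * n + 1) * deriv φ (r t) / r t)) ∧
      (-(deriv (deriv h) t) / h t - (2 * n - 2) * (deriv f t * deriv h t) / (f t * h t)
          + (2 * n - 2) * (h t) ^ 2 / (f t) ^ 4
          = (1 / 2) * (deriv (deriv φ) (r t) + (2 * n + 1) * deriv φ (r t) / r t)) ∧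
      (-(deriv (deriv f) t) / f t - (deriv f t * deriv h t) / (f t * h t)
          - (2 * n - 3) * (deriv f t) ^ 2 / (f t) ^ 2 + 2 * n / (f t) ^ 2
          - 2 * (h t) ^ 2 / (f t) ^ 4
          = deriv φ (r t) / r t + 2 * n * φ (r t) / (r t) ^ 2) := by
  subst f h
  intro t hrt hφt
  have hφ₁ : Differentiable ℝ φ := hφ.differentiable two_ne_zero
  have hpos : 0 < 1 - φ (r t) := sub_pos.2 hφt
  have hs : √(1 - φ (r t)) ≠ 0 := (sqrt_pos.2 hpos).ne'
  rw [deriv_deriv_mul_sqrt_one_sub_comp hφ₁ (hφ.differentiable_deriv_two _) hr hφt,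
    deriv_deriv_of_hasDerivAt_sqrt (hφ₁ _) hr hφt,
    (hasDerivAt_mul_sqrt_one_sub_comp (hφ₁ _) (hr t) hφt).deriv, (hr t).deriv]
  exact ⟨ricci₀_eq _ _ _ _ _ hrt.ne' hs, ricci₁_eq _ _ _ _ _ hrt.ne' hs,
    ricci₂_eq _ _ _ _ _ hrt.ne' hs (sq_sqrt hpos.le)⟩

/-- Substituting `f(t) = r(t)` and `h(t) = r(t)√(1−φ(r(t)))`, where the
reparametrization satisfies `dr/dt = √(1−φ(r))`, into the doubly warped Ricci
formulas (3) yields the Ricci formulas of the ansatz (4):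
`Ric(X₀,X₀) = Ric(X₁,X₁) = (1/2)(φ'' + (2n+1)φ'/r)` and
`Ric(X₂,X₂) = φ'/r + 2nφ/r²`. -/
theorem stmt_10 (n : ℕ) (hn : 1 ≤ n)
    (φ : ℝ → ℝ) (hφ : ContDiff ℝ 2 φ)
    (r : ℝ → ℝ) (hr : ∀ t, HasDerivAt r (Real.sqrt (1 - φ (r t))) t)
    (f h : ℝ → ℝ) (hf : f = r)
    (hh : h = fun t => r t * Real.sqrt (1 - φ (r t))) :
    ∀ t : ℝ, 0 < r t → φ (r t) < 1 →
      (-(deriv (deriv h) t) / h t - (2 * n - 2) * (deriv (deriv f) t) / f t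
          = (1 / 2) * (deriv (deriv φ) (r t) + (2 * n + 1) * deriv φ (r t) / r t)) ∧
      (-(deriv (deriv h) t) / h t - (2 * n - 2) * (deriv f t * deriv h t) / (f t * h t)
          + (2 * n - 2) * (h t) ^ 2 / (f t) ^ 4
          = (1 / 2) * (deriv (deriv φ) (r t) + (2 * n + 1) * deriv φ (r t) / r t)) ∧
      (-(deriv (deriv f) t) / f t - (deriv f t * deriv h t) / (f t * h t)
          - (2 * n - 3) * (deriv f t) ^ 2 / (f t) ^ 2 + 2 * n / (f t) ^ 2
          - 2 * (h t) ^ 2 / (f t) ^ 4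
          = deriv φ (r t) / r t + 2 * n * φ (r t) / (r t) ^ 2) :=
  stmt_10_general n φ hφ r hr f h hf hh
end

section
/- For φ(r) = r^{-2n}(1 + ∫₁^r ψ(s)s^{2n-1} ds) with ψ continuous and ψ(1) = 0, the functions f(t) = r(t) and h(t) = r(t)√(1−φ(r(t))) (with dt = dr/√(1−φ(r))) satisfy at r = 1: (d/dt)f = 0 and (d/dt)h = −φ'(1)/2 = n. -/
open Filter Topology

/-!
Writing `φ = F / r ^ m` with `F r = 1 + ∫₁^r g` and `m = 2n`, the quotient rule gives
`φ' = g / r ^ m - m φ / r` away from `0`. This formula is continuous at `r = 1`, where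
`g 1 = 0` and `φ 1 = 1`, so `φ' → -m` as `r → 1`; both limits then follow by continuity.
-/

theorem HasDerivAt.div_pow {F : ℝ → ℝ} {F' r : ℝ} (m : ℕ) (hF : HasDerivAt F F' r)
    (hr : r ≠ 0) :
    HasDerivAt (fun x => F x / x ^ m) (F' / r ^ m - m * (F r / r ^ m) / r) r := by
  refine (hF.div (hasDerivAt_pow m r) (pow_ne_zero m hr)).congr_deriv ?_
  rcases m with _ | m
  · simp
  · rw [Nat.add_sub_cancel]
    field_simp
    ring

theorem hasDerivAt_integral_div_pow {g : ℝ → ℝ} (hg : Continuous g) (a c : ℝ) (m : ℕ)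
    {r : ℝ} (hr : r ≠ 0) :
    HasDerivAt (fun x => (c + ∫ s in a..x, g s) / x ^ m)
      (g r / r ^ m - m * ((c + ∫ s in a..r, g s) / r ^ m) / r) r :=
  (((hg.integral_hasStrictDerivAt a r).hasDerivAt).const_add c).div_pow m hr

theorem continuousAt_deriv_of_eventually_hasDerivAt {φ φ' : ℝ → ℝ} {x : ℝ}
    (hφ : ∀ᶠ y in 𝓝 x, HasDerivAt φ (φ' y) y) (hφ' : ContinuousAt φ' x) :
    ContinuousAt (deriv φ) x :=
  hφ'.congr (hφ.mono fun _ hy => hy.deriv.symm)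

theorem stmt_11_general (n : ℕ)
    (ψ : ℝ → ℝ) (hψ : Continuous ψ) (hψ1 : ψ 1 = 0)
    (φ : ℝ → ℝ)
    (hφ : ∀ r, φ r = (1 + ∫ s in (1:ℝ)..r, ψ s * s ^ (2 * n - 1)) / r ^ (2 * n)) :
    φ 1 = 1 ∧ deriv φ 1 = -(2 * n) ∧
    Filter.Tendsto (fun r => Real.sqrt (1 - φ r)) (nhdsWithin 1 (Set.Ioi 1)) (nhds 0) ∧
    Filter.Tendsto (fun r => (1 - φ r) - r * deriv φ r / 2)
      (nhdsWithin 1 (Set.Ioi 1)) (nhds n) ∧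
    -(deriv φ 1) / 2 = n := by
  set g : ℝ → ℝ := fun s => ψ s * s ^ (2 * n - 1)
  have hg : Continuous g := hψ.mul (continuous_pow _)
  set φ' : ℝ → ℝ := fun r => g r / r ^ (2 * n) - (2 * n : ℕ) * φ r / r
  have hφ' : ∀ r ≠ 0, HasDerivAt φ (φ' r) r := by
    intro r hr
    have h := hasDerivAt_integral_div_pow hg 1 1 (2 * n) hr
    rwa [← funext hφ, ← hφ r] at h
  have hφ1 : φ 1 = 1 := by simp [hφ]
  have hderiv1 : deriv φ 1 = -(2 * n) := by
    rw [(hφ' 1 one_ne_zero).deriv]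
    simp [φ', g, hψ1, hφ1]
  have hφ_cont : ContinuousAt φ 1 := (hφ' 1 one_ne_zero).continuousAt
  have hderiv_cont : ContinuousAt (deriv φ) 1 := by
    refine continuousAt_deriv_of_eventually_hasDerivAt
      ((eventually_ne_nhds one_ne_zero).mono hφ') ?_
    exact (hg.continuousAt.div (continuousAt_pow _ _) (by simp)).sub
      ((continuousAt_const.mul hφ_cont).div continuousAt_id one_ne_zero)
  refine ⟨hφ1, hderiv1, ?_, ?_, by rw [hderiv1]; ring⟩
  · have h := (Real.continuous_sqrt.continuousAt.comp
      (continuousAt_const.sub hφ_cont : ContinuousAt (fun r => 1 - φ r) 1)).tendsto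
    simpa [hφ1, Function.comp_def] using h.mono_left nhdsWithin_le_nhds
  · have h : ContinuousAt (fun r => (1 - φ r) - r * deriv φ r / 2) 1 :=
      (continuousAt_const.sub hφ_cont).sub ((continuousAt_id.mul hderiv_cont).div_const 2)
    convert h.tendsto.mono_left nhdsWithin_le_nhds using 2
    simp only [hφ1, hderiv1]
    ring

/-- Smoothness criterion at `r = 1`: for
`φ(r) = r^{-2n}(1 + ∫₁^r ψ(s)s^{2n-1} ds)` with `ψ` continuous and `ψ(1) = 0`,
we have `φ(1) = 1`, `φ'(1) = −2n`, and with respect to the arclength parameter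
`t` (`dt = dr/√(1−φ(r))`) the warping functions `f(t) = r(t)` and
`h(t) = r(t)√(1−φ(r(t)))` satisfy at `r = 1`:
`df/dt = √(1−φ(r)) → 0` and `dh/dt = (1−φ(r)) − r·φ'(r)/2 → −φ'(1)/2 = n`
as `r → 1⁺`. -/
theorem stmt_11 (n : ℕ) (hn : 1 ≤ n)
    (ψ : ℝ → ℝ) (hψ : Continuous ψ) (hψ1 : ψ 1 = 0)
    (φ : ℝ → ℝ)
    (hφ : ∀ r, φ r = (1 + ∫ s in (1:ℝ)..r, ψ s * s ^ (2 * n - 1)) / r ^ (2 * n)) :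
    φ 1 = 1 ∧ deriv φ 1 = -(2 * n) ∧
    Filter.Tendsto (fun r => Real.sqrt (1 - φ r)) (nhdsWithin 1 (Set.Ioi 1)) (nhds 0) ∧
    Filter.Tendsto (fun r => (1 - φ r) - r * deriv φ r / 2)
      (nhdsWithin 1 (Set.Ioi 1)) (nhds n) ∧
    -(deriv φ 1) / 2 = n :=
  stmt_11_general n ψ hψ hψ1 φ hφ
end
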